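/- arXiv:2406.00844 — 2 statements merged into one kernel-verified Lean document; each statement's English description precedes it below -/
import Mathlib

section
/- Let α, β, γ, δ, η be positive reals, ρ̄ > 0, and q̄ ∈ ℝ³ with all components nonzero. There is no symmetric positive definite 8×8 real matrix S such that S·A(ξ) = A(ξ)ᵀ·S for all ξ ∈ S², where A(ξ) is the 8×8 symbol matrix of the (1,-1)-quasilinear Cattaneo system (with the antisymmetric coupling block Q(q̄;ξ) in the heat-flux rows). -/
/-!
Evaluate the symmetrizer relation `S A(ξ) = A(ξ)ᵀ S` at the coordinate directions `ξ = e₀` and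
`ξ = e₁`. Six of its entries form a triangular linear system which successively forces
`S₅₇, S₅₄, S₂₅, S₂₁, S₀₅` and finally the diagonal entry `S₅₅` to vanish, which is impossible
for a positive definite `S`.
-/

open Finset Matrix

/-- The 8×8 symbol matrix of the (1,-1)-quasilinear Cattaneo system. -/
def Asym (α β γ δ η ρ : ℝ) (v q ξ : Fin 3 → ℝ) : Matrix (Fin 8) (Fin 8) ℝ :=
  let w : ℝ := ∑ i, v i * ξ i
  !![w,        ρ * ξ 0,                 ρ * ξ 1,                 ρ * ξ 2,                 0,        0, 0, 0;
     α * ξ 0,  w,                       0,                       0,                       η * ξ 0,  0, 0, 0;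
     α * ξ 1,  0,                       w,                       0,                       η * ξ 1,  0, 0, 0;
     α * ξ 2,  0,                       0,                       w,                       η * ξ 2,  0, 0, 0;
     0,        β * ξ 0,                 β * ξ 1,                 β * ξ 2,                 w,        γ * ξ 0, γ * ξ 1, γ * ξ 2;
     0,        0,                       ξ 0 * q 1 - ξ 1 * q 0,   ξ 0 * q 2 - ξ 2 * q 0,   δ * ξ 0,  w, 0, 0;
     0,        ξ 1 * q 0 - ξ 0 * q 1,   0,                       ξ 1 * q 2 - ξ 2 * q 1,   δ * ξ 1,  0, w, 0;
     0,        ξ 2 * q 0 - ξ 0 * q 2,   ξ 2 * q 1 - ξ 1 * q 2,   0,                       δ * ξ 2,  0, 0, w]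

section Symmetrizer

variable {α β γ δ η ρ : ℝ} {v q : Fin 3 → ℝ} {S : Matrix (Fin 8) (Fin 8) ℝ}

lemma Asym_symmetrizer_relations_e₀
    (h : S * Asym α β γ δ η ρ v q ![1, 0, 0] = (Asym α β γ δ η ρ v q ![1, 0, 0])ᵀ * S) :
    q 1 * S 5 7 = 0 ∧ η * S 2 1 + δ * S 2 5 = q 1 * S 5 4 ∧ q 1 * S 0 5 = α * S 1 2 := by
  have e27 := congrFun (congrFun h 2) 7
  have e24 := congrFun (congrFun h 2) 4
  have e02 := congrFun (congrFun h 0) 2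
  simp only [Asym, mul_apply, transpose_apply, of_apply, Fin.sum_univ_succ, univ_unique,
    sum_singleton, sum_const_zero, Fin.isValue, Fin.default_eq_zero, Fin.succ_zero_eq_one,
    Fin.succ_one_eq_two, Fin.reduceSucc, Matrix.cons_val, cons_val', cons_val_zero, cons_val_one,
    cons_val_succ, cons_val_fin_one, mul_zero, mul_one, zero_mul, one_mul, add_zero, zero_add,
    sub_self, sub_zero, zero_sub] at e27 e24 e02
  exact ⟨by linarith, by linarith, by linarith⟩

lemma Asym_symmetrizer_relations_e₁
    (h : S * Asym α β γ δ η ρ v q ![0, 1, 0] = (Asym α β γ δ η ρ v q ![0, 1, 0])ᵀ * S) :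
    γ * S 5 4 = 0 ∧ α * S 2 5 = 0 ∧ ρ * S 5 0 + β * S 5 4 = q 0 * S 5 5 + q 2 * S 5 7 := by
  have e56 := congrFun (congrFun h 5) 6
  have e05 := congrFun (congrFun h 0) 5
  have e52 := congrFun (congrFun h 5) 2
  simp only [Asym, mul_apply, transpose_apply, of_apply, Fin.sum_univ_succ, univ_unique,
    sum_singleton, sum_const_zero, sum_neg_distrib, Fin.isValue, Fin.default_eq_zero,
    Fin.succ_zero_eq_one, Fin.succ_one_eq_two, Fin.reduceSucc, Matrix.cons_val, cons_val',
    cons_val_zero, cons_val_one, cons_val_succ, cons_val_fin_one, mul_zero, mul_one, zero_mul,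
    one_mul, mul_neg, add_zero, zero_add, sub_self, sub_zero, zero_sub] at e56 e05 e52
  exact ⟨by linarith, by linarith, by linarith⟩

lemma Asym_symmetrizer_apply_five_five_eq_zero (hS : S.IsSymm)
    (hα : α ≠ 0) (hγ : γ ≠ 0) (hη : η ≠ 0) (hq₀ : q 0 ≠ 0) (hq₁ : q 1 ≠ 0)
    (h₀ : S * Asym α β γ δ η ρ v q ![1, 0, 0] = (Asym α β γ δ η ρ v q ![1, 0, 0])ᵀ * S)
    (h₁ : S * Asym α β γ δ η ρ v q ![0, 1, 0] = (Asym α β γ δ η ρ v q ![0, 1, 0])ᵀ * S) :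
    S 5 5 = 0 := by
  obtain ⟨r57, r21, r05⟩ := Asym_symmetrizer_relations_e₀ h₀
  obtain ⟨r54, r25, r55⟩ := Asym_symmetrizer_relations_e₁ h₁
  have h57 : S 5 7 = 0 := eq_zero_of_ne_zero_of_mul_left_eq_zero hq₁ r57
  have h54 : S 5 4 = 0 := eq_zero_of_ne_zero_of_mul_left_eq_zero hγ r54
  have h25 : S 2 5 = 0 := eq_zero_of_ne_zero_of_mul_left_eq_zero hα r25
  have h21 : S 2 1 = 0 :=
    eq_zero_of_ne_zero_of_mul_left_eq_zero hη (by rw [h54, h25] at r21; linarith)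
  have h05 : S 0 5 = 0 :=
    eq_zero_of_ne_zero_of_mul_left_eq_zero hq₁ (by rw [r05, hS.apply 2 1, h21, mul_zero])
  refine eq_zero_of_ne_zero_of_mul_left_eq_zero hq₀ ?_
  rw [hS.apply 0 5, h05, h54, h57] at r55
  linarith

end Symmetrizer

theorem stmt_2_general (α β γ δ η ρ : ℝ) (hα : 0 < α) (hγ : 0 < γ)
    (hη : 0 < η) (v q : Fin 3 → ℝ) (hq : ∀ i, q i ≠ 0) :
    ¬ ∃ S : Matrix (Fin 8) (Fin 8) ℝ, S.IsSymm ∧ S.PosDef ∧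
      ∀ ξ : Fin 3 → ℝ, (∑ i, ξ i ^ 2) = 1 →
        S * Asym α β γ δ η ρ v q ξ = (Asym α β γ δ η ρ v q ξ)ᵀ * S := by
  rintro ⟨S, hS, hpd, h⟩
  have h₀ := h ![1, 0, 0] (by simp [Fin.sum_univ_succ])
  have h₁ := h ![0, 1, 0] (by simp [Fin.sum_univ_succ])
  exact hpd.diag_pos.ne' <| Asym_symmetrizer_apply_five_five_eq_zero hS hα.ne' hγ.ne' hη.ne'
    (hq 0) (hq 1) h₀ h₁

theorem stmt_2 (α β γ δ η ρ : ℝ) (hα : 0 < α) (hβ : 0 < β) (hγ : 0 < γ)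
    (hδ : 0 < δ) (hη : 0 < η) (hρ : 0 < ρ) (v q : Fin 3 → ℝ) (hq : ∀ i, q i ≠ 0) :
    ¬ ∃ S : Matrix (Fin 8) (Fin 8) ℝ, S.IsSymm ∧ S.PosDef ∧
      ∀ ξ : Fin 3 → ℝ, (∑ i, ξ i ^ 2) = 1 →
        S * Asym α β γ δ η ρ v q ξ = (Asym α β γ δ η ρ v q ξ)ᵀ * S :=
  stmt_2_general α β γ δ η ρ hα hγ hη v q hq
end

section
/- With notation as in the previous context (Θ, Φ = 4p_ρκ/(ρe_θτ), z₊² = (Θ+√(Θ²-Φ))/2, z₋² = (Θ-√(Θ²-Φ))/2), one has z₊² - z₋² ≥ θp_θ²/(ρ²e_θ). -/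
-- `(a + b + c)² - 4ac - b² = (a - c)² + 2b(a + c) ≥ 0`
theorem le_sqrt_add_add_sq_sub_four_mul {a b c : ℝ} (hb : 0 ≤ b) (hac : 0 ≤ a + c) :
    b ≤ √((a + b + c) ^ 2 - 4 * a * c) := by
  apply Real.le_sqrt_of_sq_le
  nlinarith [sq_nonneg (a - c), mul_nonneg hb hac]

theorem stmt_7_general (pρ pθ eθ κ ρ θ τ : ℝ)
    (hpρ : 0 < pρ) (heθ : 0 < eθ) (hκ : 0 < κ)
    (hρ : 0 < ρ) (hθ : 0 < θ) (hτ : 0 < τ) :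
    let Θ : ℝ := pρ + θ * pθ ^ 2 / (ρ ^ 2 * eθ) + κ / (ρ * eθ * τ)
    let Φ : ℝ := 4 * pρ * κ / (ρ * eθ * τ)
    let zp : ℝ := (Θ + Real.sqrt (Θ ^ 2 - Φ)) / 2
    let zm : ℝ := (Θ - Real.sqrt (Θ ^ 2 - Φ)) / 2
    zp - zm ≥ θ * pθ ^ 2 / (ρ ^ 2 * eθ) := by
  intro Θ Φ zp zm
  have hΦ : Φ = 4 * pρ * (κ / (ρ * eθ * τ)) := mul_div_assoc _ _ _
  calc θ * pθ ^ 2 / (ρ ^ 2 * eθ) ≤ √(Θ ^ 2 - Φ) := by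
        rw [hΦ]
        exact le_sqrt_add_add_sq_sub_four_mul (by positivity) (by positivity)
    _ = zp - zm := by ring

theorem stmt_7 (pρ pθ eθ κ ρ θ τ : ℝ)
    (hpρ : 0 < pρ) (hpθ : 0 < pθ) (heθ : 0 < eθ) (hκ : 0 < κ)
    (hρ : 0 < ρ) (hθ : 0 < θ) (hτ : 0 < τ) :
    let Θ : ℝ := pρ + θ * pθ ^ 2 / (ρ ^ 2 * eθ) + κ / (ρ * eθ * τ)
    let Φ : ℝ := 4 * pρ * κ / (ρ * eθ * τ)
    let zp : ℝ := (Θ + Real.sqrt (Θ ^ 2 - Φ)) / 2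
    let zm : ℝ := (Θ - Real.sqrt (Θ ^ 2 - Φ)) / 2
    zp - zm ≥ θ * pθ ^ 2 / (ρ ^ 2 * eθ) :=
  stmt_7_general pρ pθ eθ κ ρ θ τ hpρ heθ hκ hρ hθ hτ
end
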